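/- Let C_{m,k,j} be the set of compositions of m into j ordered parts (each part ≥ 0) with exactly k zero parts. With each composition identified with a Motzkin path (part λ ≥ 1 ↦ u^λ d^λ, part 0 ↦ h), for all m, k, j ≥ 0: ∑_{C ∈ C_{m,k,j}} ∏ t_i^{u_i(C)} ∏ s_i^{h_i(C)} = [P_k^{(j-k+1)}(1!s₁,2!s₂,…)/k!] · [(j-k)! B_{m,j-k}(1!t₁,2!t₂,…)/m!]. -/

import Mathlib

/-- Index set for the partial Bell polynomial `B_{m,r}`: sequences
`(r₁, …, r_m)` of nonnegative integers with `r₁+⋯+r_m = r` and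
`r₁+2r₂+⋯+m·r_m = m`. -/
def bellIndex (m r : ℕ) : Finset (Fin m → ℕ) :=
  (Fintype.piFinset fun _ => Finset.range (m+1)).filter
    fun c => (∑ i, c i) = r ∧ (∑ i, (i.1+1) * c i) = m

/-- The partial Bell polynomial `B_{m,r}(x₁,x₂,…)`, where `x i` is the `i`-th variable:
`B_{m,r} = ∑ m!/(r₁!⋯r_m!) ∏ (x_i/i!)^{r_i}`. -/
def partialBell (x : ℕ → ℚ) (m r : ℕ) : ℚ :=
  ∑ c ∈ bellIndex m r,
    ((m.factorial : ℚ) / ∏ i, ((c i).factorial : ℚ)) *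
      ∏ i, (x (i.1+1) / ((i.1+1).factorial : ℚ)) ^ c i

/-- The potential polynomial `P_n^{(λ)}(f₁,f₂,…)` (for a nonnegative integer
exponent `λ`), defined by `(1 + ∑_{n≥1} f_n x^n/n!)^λ = 1 + ∑_{n≥1} P_n^{(λ)} x^n/n!`. -/
noncomputable def potentialPoly (f : ℕ → ℚ) (lam n : ℕ) : ℚ :=
  (n.factorial : ℚ) * PowerSeries.coeff n
    ((PowerSeries.mk fun i => if i = 0 then 1 else f i / (i.factorial : ℚ)) ^ lam)

open scoped Classical in
/-- Compositions of `m` into `j` ordered nonnegative parts, exactly `k` of which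
are zero. -/
noncomputable def compSet (m k j : ℕ) : Finset (Fin j → ℕ) :=
  (Fintype.piFinset fun _ => Finset.range (m+1)).filter
    fun c => (∑ i, c i) = m ∧ (List.ofFn c).count 0 = k

/-- The maximal runs of consecutive zero parts of a composition. -/
def zeroRuns (c : List ℕ) : List (List ℕ) :=
  (c.splitBy (fun a b => (a == 0) == (b == 0))).filter (fun g => g.head? == some 0)

/-- `hRunCount c i` = number of maximal runs of exactly `i` consecutive zero parts;
under the identification of a composition with a Motzkin path (a part `λ ≥ 1`
becomes `u^λ d^λ` and a part `0` becomes `h`), this is the number of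
`h`-segments of length `i`. -/
def hRunCount (c : List ℕ) (i : ℕ) : ℕ :=
  ((zeroRuns c).filter (fun g => g.length == i)).length

/-!
Cutting a composition into the lengths of its `j-k+1` (possibly empty) runs of zeros and the
sequence of its `j-k` nonzero parts is a bijection onto pairs (weak composition of `k` into
`j-k+1` parts, composition of `m` into `j-k` positive parts), and the weight factors along it:
a part `i ≥ 1` contributes `t_i`, a nonempty zero run of length `i` contributes `s_i`. The two
factor sums are `[x^k] (1 + ∑ s_i x^i)^(j-k+1)`, which is `P_k^{(j-k+1)}/k!` by definition, and
`[x^m] (∑ t_i x^i)^(j-k)`, which is `(j-k)! B_{m,j-k}/m!` by the multinomial theorem.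
-/

namespace List

theorem sum_filter_ne_zero (l : List ℕ) : (l.filter (· ≠ 0)).sum = l.sum := by
  induction l with
  | nil => rfl
  | cons a l ih => by_cases ha : a = 0 <;> simp_all

theorem length_filter_ne_zero_add_count_zero (l : List ℕ) :
    (l.filter (· ≠ 0)).length + l.count 0 = l.length := by
  induction l with
  | nil => rfl
  | cons a l ih => by_cases ha : a = 0 <;> simp_all <;> omega

end List

section
open List

theorem zeroRuns_append {l l' : List ℕ}
    (h : ∀ x ∈ l.getLast?, ∀ y ∈ l'.head?, (x = 0 ↔ y ≠ 0)) :
    zeroRuns (l ++ l') = zeroRuns l ++ zeroRuns l' := by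
  unfold zeroRuns
  rw [splitBy_append, filter_append]
  intro x hx y hy
  have := h x hx y hy
  by_cases hx0 : x = 0 <;> simp_all

theorem zeroRuns_eq_nil_of_forall_ne_zero {l : List ℕ} (h : ∀ x ∈ l, x ≠ 0) :
    zeroRuns l = [] := by
  refine filter_eq_nil_iff.2 fun g hg hg0 => ?_
  have h0 : 0 ∈ g := mem_of_mem_head? (by simpa using hg0)
  exact h 0 (flatten_splitBy _ l ▸ mem_flatten_of_mem hg h0) rfl

theorem zeroRuns_replicate (g : ℕ) :
    zeroRuns (replicate g 0) = ([g].filter (· ≠ 0)).map (replicate · 0) := by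
  cases g with
  | zero => rfl
  | succ g =>
    rw [zeroRuns, splitBy_of_isChain (by simp) (isChain_replicate_of_rel _ (by simp))]
    simp [replicate_succ]

theorem zeroRuns_cons_of_ne_zero {a : ℕ} (ha : a ≠ 0) (l : List ℕ) :
    zeroRuns (a :: l) = zeroRuns l := by
  have hdrop : ∀ y ∈ (l.dropWhile (· ≠ 0)).head?, y = 0 := by
    intro y hy
    have := head?_dropWhile_not (fun x => decide (x ≠ 0)) l
    rw [hy] at this
    simpa using this
  have hskip : ∀ p : List ℕ, (∀ x ∈ p, x ≠ 0) →
      zeroRuns (p ++ l.dropWhile (· ≠ 0)) = zeroRuns (l.dropWhile (· ≠ 0)) := by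
    intro p hp
    rw [zeroRuns_append, zeroRuns_eq_nil_of_forall_ne_zero hp, nil_append]
    intro x hx y hy
    simp [hp x (mem_of_mem_getLast? hx), hdrop y hy]
  -- `a` only lengthens the nonzero prefix of `l`, which contributes no zero run.
  have htake : ∀ x ∈ l.takeWhile (· ≠ 0), x ≠ 0 := fun x hx => by
    simpa using mem_takeWhile_imp hx
  conv_lhs => rw [← takeWhile_append_dropWhile (p := (· ≠ 0)) (l := l), ← cons_append]
  conv_rhs => rw [← takeWhile_append_dropWhile (p := (· ≠ 0)) (l := l)]
  rw [hskip _ htake, hskip _ (forall_mem_cons.2 ⟨ha, htake⟩)]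

def interleaveZeros : List ℕ → List ℕ → List ℕ
  | [], _ => []
  | g :: _, [] => replicate g 0
  | g :: gs, a :: as => replicate g 0 ++ a :: interleaveZeros gs as

/-- The lengths of the runs of zeros before, between and after the nonzero entries, empty runs
included; `interleaveZeros` is its inverse. -/
def zeroGaps : List ℕ → List ℕ
  | [] => [0]
  | 0 :: l => (zeroGaps l).modifyHead (· + 1)
  | (_ + 1) :: l => 0 :: zeroGaps l

theorem interleaveZeros_succ_cons (g : ℕ) (gs A : List ℕ) :
    interleaveZeros ((g + 1) :: gs) A = 0 :: interleaveZeros (g :: gs) A := by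
  cases A <;> simp [interleaveZeros, replicate_succ]

theorem zeroRuns_interleaveZeros {G A : List ℕ} (hG : G.length = A.length + 1) (hA : 0 ∉ A) :
    zeroRuns (interleaveZeros G A) = (G.filter (· ≠ 0)).map (replicate · 0) := by
  induction A generalizing G with
  | nil =>
    obtain ⟨g, rfl⟩ := length_eq_one_iff.1 hG
    exact zeroRuns_replicate g
  | cons a as ih =>
    obtain ⟨g, gs, rfl⟩ := exists_cons_of_length_eq_add_one hG
    have ha : a ≠ 0 := fun h => hA (h ▸ mem_cons_self)
    rw [interleaveZeros, zeroRuns_append, zeroRuns_replicate, zeroRuns_cons_of_ne_zero ha,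
      ih (by simpa using hG) (fun h => hA (mem_cons_of_mem _ h)), ← map_append, ← filter_append]
    · rfl
    · intro x hx y hy
      simp_all [(mem_replicate.1 (mem_of_mem_getLast? hx)).2]

theorem zeroGaps_ne_nil (l : List ℕ) : zeroGaps l ≠ [] := by
  match l with
  | [] => simp [zeroGaps]
  | 0 :: l => simpa [zeroGaps] using zeroGaps_ne_nil l
  | (_ + 1) :: l => simp [zeroGaps]

theorem length_zeroGaps (l : List ℕ) : (zeroGaps l).length = (l.filter (· ≠ 0)).length + 1 := by
  induction l with
  | nil => rfl
  | cons a l ih => cases a <;> simp [zeroGaps, ih]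

theorem sum_zeroGaps (l : List ℕ) : (zeroGaps l).sum = l.count 0 := by
  induction l with
  | nil => rfl
  | cons a l ih =>
    cases a with
    | zero =>
      obtain ⟨g, gs, h⟩ := exists_cons_of_ne_nil (zeroGaps_ne_nil l)
      rw [h] at ih
      simp [zeroGaps, h, ← ih]; omega
    | succ a => simp [zeroGaps, ih]

theorem interleaveZeros_zeroGaps (l : List ℕ) :
    interleaveZeros (zeroGaps l) (l.filter (· ≠ 0)) = l := by
  induction l with
  | nil => rfl
  | cons a l ih =>
    cases a with
    | zero =>
      obtain ⟨g, gs, h⟩ := exists_cons_of_ne_nil (zeroGaps_ne_nil l)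
      rw [h] at ih
      simp_all [zeroGaps, interleaveZeros_succ_cons]
    | succ a => simp_all [zeroGaps, interleaveZeros]

theorem zeroGaps_replicate_append (g : ℕ) (l : List ℕ) :
    zeroGaps (replicate g 0 ++ l) = (zeroGaps l).modifyHead (· + g) := by
  induction g with
  | zero => exact (congrFun modifyHead_id _).symm
  | succ g ih =>
    simp [replicate_succ, zeroGaps, ih, modifyHead_modifyHead, Function.comp_def, add_assoc]

theorem zeroGaps_interleaveZeros {G A : List ℕ} (hG : G.length = A.length + 1) (hA : 0 ∉ A) :
    zeroGaps (interleaveZeros G A) = G := by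
  induction A generalizing G with
  | nil =>
    obtain ⟨g, rfl⟩ := length_eq_one_iff.1 hG
    simpa [interleaveZeros, zeroGaps] using zeroGaps_replicate_append g []
  | cons a as ih =>
    obtain ⟨g, gs, rfl⟩ := exists_cons_of_length_eq_add_one hG
    obtain ⟨a, rfl⟩ := Nat.exists_eq_succ_of_ne_zero (fun h : a = 0 => hA (h ▸ mem_cons_self))
    rw [interleaveZeros, zeroGaps_replicate_append, zeroGaps,
      ih (by simpa using hG) (fun h => hA (mem_cons_of_mem _ h))]
    simp

theorem filter_interleaveZeros {G A : List ℕ} (hG : G.length = A.length + 1) (hA : 0 ∉ A) :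
    (interleaveZeros G A).filter (· ≠ 0) = A := by
  induction A generalizing G with
  | nil =>
    obtain ⟨g, rfl⟩ := length_eq_one_iff.1 hG
    simp [interleaveZeros]
  | cons a as ih =>
    obtain ⟨g, gs, rfl⟩ := exists_cons_of_length_eq_add_one hG
    have ha : a ≠ 0 := fun h => hA (h ▸ mem_cons_self)
    have := ih (G := gs) (by simpa using hG) (fun h => hA (mem_cons_of_mem _ h))
    simp_all [interleaveZeros]

theorem hRunCount_eq_count_zeroGaps (l : List ℕ) {i : ℕ} (hi : i ≠ 0) :
    hRunCount l i = (zeroGaps l).count i := by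
  have hruns : zeroRuns l = ((zeroGaps l).filter (· ≠ 0)).map (replicate · 0) := by
    conv_lhs => rw [← interleaveZeros_zeroGaps l]
    exact zeroRuns_interleaveZeros (length_zeroGaps l) (by simp)
  rw [hRunCount, hruns, filter_map, length_map, filter_filter, count_eq_length_filter]
  congr 1
  refine filter_congr fun x _ => ?_
  by_cases hx : x = i <;> simp [hx, hi]

end

open Finset PowerSeries
open scoped Nat

theorem prod_map_eq_prod_pow_count {M : Type*} [CommMonoid M] {L : List ℕ} {S : Finset ℕ}
    (hL : ∀ x ∈ L, x ∈ S) (f : ℕ → M) : (L.map f).prod = ∏ i ∈ S, f i ^ L.count i := by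
  rw [prod_list_map_count]
  refine prod_subset (fun x hx => hL x (List.mem_toFinset.1 hx)) fun x _ hx => ?_
  rw [List.count_eq_zero_of_not_mem (mt List.mem_toFinset.2 hx), pow_zero]

theorem prod_Icc_pow_count {M : Type*} [CommMonoid M] (t : ℕ → M) {l : List ℕ} {m : ℕ}
    (hl : l.sum = m) :
    ∏ i ∈ Icc 1 m, t i ^ l.count i = ((l.filter (· ≠ 0)).map t).prod := by
  rw [prod_map_eq_prod_pow_count (S := Icc 1 m)]
  · refine prod_congr rfl fun i hi => ?_
    rw [List.count_filter (by simp at hi ⊢; omega)]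
  · intro x hx
    have hle := List.le_sum_of_mem hx
    rw [List.sum_filter_ne_zero, hl] at hle
    have hx0 : x ≠ 0 := by simpa using (List.mem_filter.1 hx).2
    simp only [mem_Icc]
    omega

theorem prod_Icc_pow_hRunCount {M : Type*} [CommMonoid M] (s : ℕ → M) {l : List ℕ} {k : ℕ}
    (hl : l.count 0 = k) :
    ∏ i ∈ Icc 1 k, s i ^ hRunCount l i =
      ((zeroGaps l).map fun i => if i = 0 then 1 else s i).prod := by
  rw [prod_map_eq_prod_pow_count (S := insert 0 (Icc 1 k)), prod_insert (by simp), if_pos rfl,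
    one_pow, one_mul]
  · refine prod_congr rfl fun i hi => ?_
    have hi0 : i ≠ 0 := by simp at hi; omega
    rw [if_neg hi0, hRunCount_eq_count_zeroGaps l hi0]
  · intro x hx
    have hle := List.le_sum_of_mem hx
    rw [sum_zeroGaps, hl] at hle
    simp only [mem_insert, mem_Icc]
    omega

def weakCompositions (n r : ℕ) : Finset (List ℕ) :=
  (Nat.antidiagonalTuple r n).image List.ofFn

theorem mem_weakCompositions {n r : ℕ} {l : List ℕ} :
    l ∈ weakCompositions n r ↔ l.length = r ∧ l.sum = n := by
  constructor
  · intro hl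
    obtain ⟨c, hc, rfl⟩ := mem_image.1 hl
    exact ⟨List.length_ofFn, by rwa [List.sum_ofFn, ← Nat.mem_antidiagonalTuple]⟩
  · rintro ⟨rfl, hsum⟩
    exact mem_image.2 ⟨l.get, by rwa [Nat.mem_antidiagonalTuple, ← List.sum_ofFn, List.ofFn_get],
      List.ofFn_get l⟩

theorem coeff_pow_eq_sum_weakCompositions {R : Type*} [CommSemiring R]
    (f : R⟦X⟧) (r n : ℕ) :
    coeff n (f ^ r) = ∑ l ∈ weakCompositions n r, (l.map fun i => coeff i f).prod := by
  classical
  rw [weakCompositions, sum_image fun _ _ _ _ h => List.ofFn_injective h, ← Fin.prod_const,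
    coeff_prod, ← piAntidiag_univ_fin_eq_antidiagonalTuple, finsuppAntidiag, sum_map]
  simp only [List.map_ofFn, List.prod_ofFn]
  exact sum_attach _ fun g : Fin r → ℕ => ∏ i, coeff (g i) f

theorem image_ofFn_compSet (m k j : ℕ) :
    (compSet m k j).image List.ofFn = (weakCompositions m j).filter (·.count 0 = k) := by
  ext l
  rw [mem_filter, mem_weakCompositions]
  constructor
  · intro hl
    obtain ⟨c, hc, rfl⟩ := mem_image.1 hl
    simp only [compSet, mem_filter] at hc
    exact ⟨⟨List.length_ofFn, by rw [List.sum_ofFn, hc.2.1]⟩, hc.2.2⟩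
  · rintro ⟨⟨rfl, hsum⟩, hcount⟩
    refine mem_image.2 ⟨l.get, ?_, List.ofFn_get l⟩
    simp only [compSet, mem_filter, Fintype.mem_piFinset, mem_range, List.ofFn_get]
    refine ⟨fun i => ?_, by rw [← List.sum_ofFn, List.ofFn_get, hsum], hcount⟩
    have := List.le_sum_of_mem (List.getElem_mem i.2)
    simp only [List.get_eq_getElem]
    omega

theorem sum_filter_count_zero_eq_sum_product {M : Type*} [AddCommMonoid M] {m k j : ℕ}
    (hkj : k ≤ j) (F : List ℕ → List ℕ → M) :
    ∑ l ∈ (weakCompositions m j).filter (·.count 0 = k), F (zeroGaps l) (l.filter (· ≠ 0)) =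
      ∑ p ∈ weakCompositions k (j - k + 1) ×ˢ (weakCompositions m (j - k)).filter (0 ∉ ·),
        F p.1 p.2 := by
  refine sum_nbij' (fun l => (zeroGaps l, l.filter (· ≠ 0))) (fun p => interleaveZeros p.1 p.2)
    ?_ ?_ (fun l _ => interleaveZeros_zeroGaps l) ?_ (fun _ _ => rfl)
  · intro l hl
    simp only [mem_filter, mem_product, mem_weakCompositions] at hl ⊢
    have := List.length_filter_ne_zero_add_count_zero l
    refine ⟨⟨by rw [length_zeroGaps]; omega, by rw [sum_zeroGaps, hl.2]⟩,
      ⟨by omega, by rw [List.sum_filter_ne_zero, hl.1.2]⟩, by simp⟩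
  · rintro ⟨G, A⟩ hp
    simp only [mem_filter, mem_product, mem_weakCompositions] at hp ⊢
    obtain ⟨⟨hGl, hGs⟩, ⟨hAl, hAs⟩, hA0⟩ := hp
    have hG : G.length = A.length + 1 := by omega
    have hcount : (interleaveZeros G A).count 0 = k := by
      rw [← sum_zeroGaps, zeroGaps_interleaveZeros hG hA0, hGs]
    have := List.length_filter_ne_zero_add_count_zero (interleaveZeros G A)
    rw [filter_interleaveZeros hG hA0] at this
    refine ⟨⟨by omega, ?_⟩, hcount⟩
    rw [← List.sum_filter_ne_zero, filter_interleaveZeros hG hA0, hAs]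
  · rintro ⟨G, A⟩ hp
    simp only [mem_filter, mem_product, mem_weakCompositions] at hp
    have hG : G.length = A.length + 1 := by omega
    exact Prod.ext (zeroGaps_interleaveZeros hG hp.2.2) (filter_interleaveZeros hG hp.2.2)

theorem potentialPoly_factorial_mul_div_factorial (s : ℕ → ℚ) (lam k : ℕ) :
    potentialPoly (fun n => n ! * s n) lam k / k ! =
      coeff k ((mk fun i => if i = 0 then 1 else s i) ^ lam) := by
  have hs : (fun i => if i = 0 then (1 : ℚ) else i ! * s i / i !) =
      fun i => if i = 0 then 1 else s i := by
    funext i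
    split_ifs
    · rfl
    · exact mul_div_cancel_left₀ _ (by positivity)
  rw [potentialPoly, hs, mul_div_cancel_left₀ _ (by positivity)]

theorem bellIndex_eq_filter_piAntidiag (m r : ℕ) :
    bellIndex m r = (piAntidiag univ r).filter fun c => m = ∑ i : Fin m, c i * (i.1 + 1) := by
  ext c
  simp only [bellIndex, mem_filter, Fintype.mem_piFinset, mem_range, mem_piAntidiag,
    mem_univ, implies_true, and_true]
  simp_rw [mul_comm (c _)]
  refine ⟨fun h => ⟨h.2.1, h.2.2.symm⟩, fun h => ⟨fun i => ?_, h.1, h.2.symm⟩⟩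
  have := single_le_sum (f := fun i : Fin m => (i.1 + 1) * c i) (by simp) (mem_univ i)
  nlinarith [h.2]

theorem factorial_mul_partialBell_div_factorial (t : ℕ → ℚ) (m r : ℕ) :
    r ! * partialBell (fun n => n ! * t n) m r / m ! =
      coeff m ((∑ i : Fin m, monomial (i.1 + 1) (t (i.1 + 1))) ^ r) := by
  classical
  simp_rw [sum_pow_eq_sum_piAntidiag, map_sum, monomial_pow, prod_monomial, ← map_natCast C,
    coeff_C_mul, coeff_monomial, mul_ite, mul_zero, ← sum_filter, partialBell,
    bellIndex_eq_filter_piAntidiag, mul_sum, sum_div]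
  refine sum_congr rfl fun c hc => ?_
  have hsum : ∑ i, c i = r := (mem_piAntidiag.1 (mem_filter.1 hc).1).1
  have hmult : (Nat.multinomial univ c : ℚ) * ∏ i, ((c i)! : ℚ) = r ! := by
    rw [← hsum]; exact_mod_cast (mul_comm _ _).trans (Nat.multinomial_spec univ c)
  have hfac : ∀ i : Fin m, ((i.1 + 1)! * t (i + 1) / (i.1 + 1)! : ℚ) = t (i.1 + 1) :=
    fun i => mul_div_cancel_left₀ _ (by positivity)
  simp_rw [hfac, ← hmult]
  field_simp

theorem coeff_sum_monomial_succ {R : Type*} [Semiring R] (t : ℕ → R) {m a : ℕ} (ha : a ≤ m) :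
    coeff a (∑ i : Fin m, monomial (i.1 + 1) (t (i.1 + 1))) = if a = 0 then 0 else t a := by
  simp_rw [map_sum, coeff_monomial]
  cases a with
  | zero => simp
  | succ a =>
    have hne : ∀ i : Fin m, i ≠ ⟨a, by omega⟩ → ¬a + 1 = i.1 + 1 :=
      fun i hi h => hi (Fin.ext (by simp only at h ⊢; omega))
    rw [Fintype.sum_eq_single _ fun i hi => if_neg (hne i hi)]
    simp

theorem coeff_pow_sum_monomial_succ {R : Type*} [CommSemiring R] (t : ℕ → R) (m r : ℕ) :
    coeff m ((∑ i : Fin m, monomial (i.1 + 1) (t (i.1 + 1))) ^ r) =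
      ∑ l ∈ (weakCompositions m r).filter (0 ∉ ·), (l.map t).prod := by
  rw [coeff_pow_eq_sum_weakCompositions, sum_filter]
  refine sum_congr rfl fun l hl => ?_
  have hle : ∀ x ∈ l, x ≤ m := fun x hx => (mem_weakCompositions.1 hl).2 ▸ List.le_sum_of_mem hx
  rw [List.map_congr_left fun x hx => coeff_sum_monomial_succ t (hle x hx)]
  split_ifs with h0
  · exact List.prod_eq_zero (List.mem_map.2 ⟨0, h0, rfl⟩)
  · exact congrArg _ (List.map_congr_left fun x hx => if_neg (ne_of_mem_of_not_mem hx h0))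

/-- Theorem 3.2: for compositions of `m` into `j` parts with `k` zero parts,
weighted by `t_i` per nonzero part equal to `i` (one `u`-segment of length `i`
each) and `s_i` per maximal run of `i` consecutive zeros,
`∑_C ∏ t_i^{u_i(C)} ∏ s_i^{h_i(C)}
  = P_k^{(j-k+1)}(1!s₁,2!s₂,…)/k! · (j-k)!·B_{m,j-k}(1!t₁,2!t₂,…)/m!`. -/
theorem composition_weighted_sum (t s : ℕ → ℚ) (m k j : ℕ) (hkj : k ≤ j) :
    ∑ c ∈ compSet m k j,
        (∏ i ∈ Finset.Icc 1 m, t i ^ (List.ofFn c).count i) *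
        (∏ i ∈ Finset.Icc 1 k, s i ^ hRunCount (List.ofFn c) i)
      = potentialPoly (fun n => (n.factorial : ℚ) * s n) (j-k+1) k / (k.factorial : ℚ)
          * (((j-k).factorial : ℚ) * partialBell (fun n => (n.factorial : ℚ) * t n) m (j-k)
              / (m.factorial : ℚ)) := by
  rw [potentialPoly_factorial_mul_div_factorial, factorial_mul_partialBell_div_factorial,
    coeff_pow_sum_monomial_succ, coeff_pow_eq_sum_weakCompositions, sum_mul_sum, ← sum_product',
    ← sum_filter_count_zero_eq_sum_product hkj
      (fun G A => (G.map fun i => coeff i (mk fun i => if i = 0 then 1 else s i)).prod *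
        (A.map t).prod),
    ← image_ofFn_compSet, sum_image fun _ _ _ _ h => List.ofFn_injective h]
  refine sum_congr rfl fun c hc => ?_
  simp only [compSet, mem_filter] at hc
  simp_rw [coeff_mk]
  rw [prod_Icc_pow_count t (by rw [List.sum_ofFn, hc.2.1]), prod_Icc_pow_hRunCount s hc.2.2,
    mul_comm]
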